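/- arXiv:1302.3759 — 5 statements merged into one kernel-verified Lean document; each statement's English description precedes it below -/
import Mathlib

section
/- Let (a_n) be a sequence of real numbers such that the Cesàro averages (1/n)·∑_{i=1}^n a_i converge to a limit a. Let (n_k) and (t_k) be sequences of natural numbers with t_k ≥ 1 for all k, n_k → ∞, and limsup_k n_k/t_k < ∞. Then (1/t_k)·∑_{i=n_k+1}^{n_k+t_k} a_i → a as k → ∞. -/
/-!
Write `c m = (∑_{i<m} a i) / m` for the Cesàro averages. The window sum is
`(n + t) c(n + t) - n c(n)`, so the window average minus `A` equals
`(n/t + 1)(c(n + t) - A) - (n/t)(c(n) - A)`. Both `c(n_k + t_k) - A` and `c(n_k) - A` tend to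
`0`, and the weights `n_k/t_k` stay bounded, so the whole expression tends to `0`.
-/

open Filter Finset Asymptotics Topology

lemma window_average_sub_eq (a : ℕ → ℝ) (A : ℝ) (n t : ℕ) (ht : t ≠ 0) :
    (∑ i ∈ Ico n (n + t), a i) / t - A =
      ((n : ℝ) / t + 1) * ((∑ i ∈ range (n + t), a i) / ↑(n + t) - A) -
        (n : ℝ) / t * ((∑ i ∈ range n, a i) / n - A) := by
  have cesaro_mul (m : ℕ) : (∑ i ∈ range m, a i) / m * m = ∑ i ∈ range m, a i :=
    div_mul_cancel_of_imp fun hm ↦ by simp [Nat.cast_eq_zero.mp hm]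
  have h₁ := cesaro_mul (n + t)
  have h₀ := cesaro_mul n
  generalize (∑ i ∈ range (n + t), a i) / ↑(n + t) = c₁ at h₁ ⊢
  generalize (∑ i ∈ range n, a i) / ↑n = c₀ at h₀ ⊢
  rw [sum_Ico_eq_sub _ (Nat.le_add_right n t), ← h₁, ← h₀]
  have ht' : (t : ℝ) ≠ 0 := Nat.cast_ne_zero.mpr ht
  push_cast
  field_simp
  ring

lemma natCast_div_isBigO_one_of_le_mul {ι : Type*} {l : Filter ι} {n t : ι → ℕ}
    (hC : ∃ C : ℝ, ∀ᶠ k in l, (n k : ℝ) ≤ C * t k) :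
    (fun k ↦ (n k : ℝ) / t k) =O[l] fun _ ↦ (1 : ℝ) := by
  obtain ⟨C, hC⟩ := hC
  refine IsBigO.of_bound |C| ?_
  filter_upwards [hC] with k hk
  rw [norm_one, mul_one, Real.norm_of_nonneg (by positivity)]
  exact div_le_of_le_mul₀ (Nat.cast_nonneg _) (abs_nonneg C)
    (hk.trans (mul_le_mul_of_nonneg_right (le_abs_self C) (Nat.cast_nonneg _)))

/-- If the Cesàro averages of `(a_n)` converge to `a`, and `(n_k)`, `(t_k)`
are sequences of naturals with `t_k ≥ 1`, `n_k → ∞`, and `n_k ≤ C·t_k` eventually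
(i.e. `limsup n_k/t_k < ∞`), then the averages of `a` over the windows
`(n_k, n_k + t_k]` converge to `a` as well. -/
theorem window_average_tendsto
    (a : ℕ → ℝ) (A : ℝ)
    (ha : Tendsto (fun n : ℕ => (∑ i ∈ Finset.range n, a i) / n) atTop (nhds A))
    (n t : ℕ → ℕ)
    (ht : ∀ k, 1 ≤ t k)
    (hn : Tendsto n atTop atTop)
    (hC : ∃ C : ℝ, ∀ᶠ k in atTop, (n k : ℝ) ≤ C * t k) :
    Tendsto (fun k : ℕ => (∑ i ∈ Finset.Ico (n k) (n k + t k), a i) / (t k))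
      atTop (nhds A) := by
  set e : ℕ → ℝ := fun m ↦ (∑ i ∈ range m, a i) / m - A
  have he : Tendsto e atTop (𝓝 0) := tendsto_sub_nhds_zero_iff.mpr ha
  have hr := natCast_div_isBigO_one_of_le_mul hC
  have hr₁ : (fun k ↦ (n k : ℝ) / t k + 1) =O[atTop] fun _ ↦ (1 : ℝ) :=
    hr.add (isBigO_refl _ _)
  have hnt : Tendsto (fun k ↦ n k + t k) atTop atTop :=
    tendsto_atTop_mono (fun k ↦ Nat.le_add_right _ _) hn
  have h_far : Tendsto (fun k ↦ ((n k : ℝ) / t k + 1) * e (n k + t k)) atTop (𝓝 0) :=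
    (hr₁.mul (isBigO_refl (fun k ↦ e (n k + t k)) _)).trans_tendsto
      (by simpa only [one_mul, Function.comp_def] using he.comp hnt)
  have h_near : Tendsto (fun k ↦ (n k : ℝ) / t k * e (n k)) atTop (𝓝 0) :=
    (hr.mul (isBigO_refl (fun k ↦ e (n k)) _)).trans_tendsto
      (by simpa only [one_mul, Function.comp_def] using he.comp hn)
  rw [← tendsto_sub_nhds_zero_iff]
  simpa only [window_average_sub_eq a A _ _ (Nat.one_le_iff_ne_zero.mp (ht _)), sub_zero]
    using h_far.sub h_near
end

section
/- For the substitution θ: 0 ↦ 00001, 1 ↦ 1110, there is no balanced pair of nonempty prefixes of the two fixed points: if A is a nonempty prefix of the fixed point u* = θ^∞(0) and B is a nonempty prefix of the fixed point v* = θ^∞(1) with N₀(A) = N₀(B) and N₁(A) = N₁(B) (so in particular |A| = |B|), then no such pair (A,B) exists. -/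
/-!
Put `α = (3 - √5) / 2`, so that `α² = 3α - 1`. The discrepancy `D(w) = N₁(w) - α |w|` is additive
and satisfies `D(θ w) = (2 + α) D(w)`. A nonempty prefix of `θ(W)` is `θ(w'c)` minus a proper
suffix of `θ(c)`, where `w'c` is a nonempty prefix of `W`, and `D` of such a suffix lies in
`[1 - 4α, 2 - 3α]`. Induction along the iterates `θᵏ(a)` therefore gives `D ≤ -α` on the nonempty
prefixes of `u*` and `D ≥ 1 - α` on those of `v*`; but a balanced pair has equal discrepancies.
-/

/-- A substitution on an alphabet `α`, extended to words by concatenation. -/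
def substApply {α : Type*} (σ : α → List α) (w : List α) : List α := w.flatMap σ

/-- `x : ℕ → α` is the one-sided fixed point of the substitution `σ` starting with the
letter `a`:  every iterate `σᵏ(a)` is a prefix of `x`. -/
def IsFixPt {α : Type*} (σ : α → List α) (a : α) (x : ℕ → α) : Prop :=
  ∀ k i (h : i < ((substApply σ)^[k] [a]).length), x i = ((substApply σ)^[k] [a])[i]

/-- The prefix of length `n` of the sequence `x`. -/
def prefixN {α : Type*} (x : ℕ → α) (n : ℕ) : List α := List.ofFn (fun i : Fin n => x i)

/-- The substitution `θ : 0 ↦ 00001, 1 ↦ 1110`. -/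
def θNP : Bool → List Bool := fun b =>
  if b then [true, true, true, false] else [false, false, false, false, true]

section Substitution

variable {α : Type*} (σ : α → List α)

@[simp]
theorem length_prefixN (x : ℕ → α) (n : ℕ) : (prefixN x n).length = n :=
  List.length_ofFn

theorem substApply_cons (a : α) (w : List α) :
    substApply σ (a :: w) = σ a ++ substApply σ w :=
  List.flatMap_cons

theorem two_mul_length_le_length_substApply (hσ : ∀ a, 2 ≤ (σ a).length) (w : List α) :
    2 * w.length ≤ (substApply σ w).length := by
  induction w with
  | nil => simp [substApply]
  | cons a w ih =>
    rw [substApply_cons, List.length_append, List.length_cons]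
    linarith [hσ a]

theorem two_pow_length_le_length_iterate_substApply (hσ : ∀ a, 2 ≤ (σ a).length)
    (w : List α) (j : ℕ) : 2 ^ j * w.length ≤ ((substApply σ)^[j] w).length := by
  induction j generalizing w with
  | zero => simp
  | succ j ih =>
    rw [Function.iterate_succ_apply, pow_succ, mul_assoc]
    exact (Nat.mul_le_mul_left _ (two_mul_length_le_length_substApply σ hσ w)).trans (ih _)

theorem exists_append_drop_eq_substApply_of_prefix {w W : List α}
    (hw : w <+: substApply σ W) (hne : w ≠ []) :
    ∃ w' c r, w' ++ [c] <+: W ∧ 0 < r ∧ w ++ (σ c).drop r = substApply σ (w' ++ [c]) := by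
  induction W generalizing w with
  | nil => exact absurd (List.prefix_nil.mp hw) hne
  | cons b W ih =>
    rw [substApply_cons] at hw
    by_cases hlen : w.length ≤ (σ b).length
    · obtain ⟨t, ht⟩ := List.prefix_of_prefix_length_le hw (List.prefix_append _ _) hlen
      refine ⟨[], b, w.length, by simp, List.length_pos_iff.mpr hne, ?_⟩
      simp [← ht, substApply]
    · obtain ⟨w₂, rfl⟩ :=
        List.prefix_of_prefix_length_le (List.prefix_append _ _) hw (by omega)
      obtain ⟨w', c, r, hpre, hr, heq⟩ :=
        ih ((List.prefix_append_right_inj _).mp hw) (by rintro rfl; simp at hlen)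
      refine ⟨b :: w', c, r, List.cons_prefix_cons.mpr ⟨rfl, hpre⟩, hr, ?_⟩
      rw [List.cons_append, substApply_cons, ← heq, List.append_assoc]

theorem prefix_iterate_substApply_induction {P : List α → Prop} {a : α} (base : P [a])
    (step : ∀ w w' c r, P (w' ++ [c]) → 0 < r →
      w ++ (σ c).drop r = substApply σ (w' ++ [c]) → P w)
    (j : ℕ) {w : List α} (hw : w <+: (substApply σ)^[j] [a]) (hne : w ≠ []) : P w := by
  induction j generalizing w with
  | zero =>
    obtain rfl : w = [a] :=
      hw.eq_of_length (le_antisymm hw.length_le (List.length_pos_iff.mpr hne))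
    exact base
  | succ j ih =>
    rw [Function.iterate_succ_apply'] at hw
    obtain ⟨w', c, r, hpre, hr, heq⟩ := exists_append_drop_eq_substApply_of_prefix σ hw hne
    exact step w w' c r (ih hpre (by simp)) hr heq

theorem IsFixPt.prefixN_prefix_iterate {a : α} {x : ℕ → α} (hx : IsFixPt σ a x)
    (hσ : ∀ b, 2 ≤ (σ b).length) (n : ℕ) : prefixN x n <+: (substApply σ)^[n] [a] := by
  have hn : n ≤ ((substApply σ)^[n] [a]).length :=
    calc n ≤ 2 ^ n * [a].length := by simpa using n.lt_two_pow_self.le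
      _ ≤ _ := two_pow_length_le_length_iterate_substApply σ hσ [a] n
  rw [List.prefix_iff_eq_take]
  refine List.ext_getElem (by simpa using hn) fun i h₁ _ => ?_
  simp [prefixN, hx n i (by simp at h₁; omega)]

end Substitution

noncomputable def freqOne : ℝ := (3 - √5) / 2

theorem freqOne_sq : freqOne ^ 2 = 3 * freqOne - 1 := by
  have := Real.sq_sqrt (show (0 : ℝ) ≤ 5 by norm_num)
  unfold freqOne
  linear_combination this / 4

theorem freqOne_mem_Icc : freqOne ∈ Set.Icc (1 / 3) (1 / 2) := by
  have h5 := Real.sq_sqrt (show (0 : ℝ) ≤ 5 by norm_num)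
  have h0 := Real.sqrt_nonneg 5
  constructor <;> unfold freqOne <;> nlinarith

noncomputable def discrepancy (w : List Bool) : ℝ := w.count true - freqOne * w.length

theorem discrepancy_append (w₁ w₂ : List Bool) :
    discrepancy (w₁ ++ w₂) = discrepancy w₁ + discrepancy w₂ := by
  simp only [discrepancy, List.count_append, List.length_append]
  push_cast
  ring

theorem discrepancy_substApply_θNP (w : List Bool) :
    discrepancy (substApply θNP w) = (2 + freqOne) * discrepancy w := by
  induction w with
  | nil => simp [discrepancy, substApply]
  | cons b w ih =>
    rw [substApply_cons, discrepancy_append, ih, ← List.singleton_append,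
      discrepancy_append (w₁ := [b])]
    cases b <;> simp [discrepancy, θNP] <;> linear_combination freqOne_sq

theorem discrepancy_drop_θNP_mem_Icc (c : Bool) {r : ℕ} (hr : 0 < r) :
    discrepancy ((θNP c).drop r) ∈ Set.Icc (1 - 4 * freqOne) (2 - 3 * freqOne) := by
  obtain ⟨h₁, h₂⟩ := freqOne_mem_Icc
  obtain _ | _ | _ | _ | _ | r := r
  · exact absurd hr (lt_irrefl 0)
  all_goals cases c <;> simp [θNP, discrepancy] <;> constructor <;> linarith

theorem discrepancy_le_of_prefix_iterate_false {j : ℕ} {w : List Bool}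
    (hw : w <+: (substApply θNP)^[j] [false]) (hne : w ≠ []) : discrepancy w ≤ -freqOne := by
  refine prefix_iterate_substApply_induction θNP (P := (discrepancy · ≤ -freqOne))
    (by simp [discrepancy]) ?_ j hw hne
  intro w w' c r ih hr heq
  have hD := congrArg discrepancy heq
  rw [discrepancy_append, discrepancy_substApply_θNP] at hD
  have hα : 0 ≤ 2 + freqOne := by linarith [freqOne_mem_Icc.1]
  calc discrepancy w
      = (2 + freqOne) * discrepancy (w' ++ [c]) - discrepancy ((θNP c).drop r) := by linarith
    _ ≤ (2 + freqOne) * -freqOne - (1 - 4 * freqOne) := by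
      gcongr
      exact (discrepancy_drop_θNP_mem_Icc c hr).1
    _ = -freqOne := by linear_combination -freqOne_sq

theorem le_discrepancy_of_prefix_iterate_true {j : ℕ} {w : List Bool}
    (hw : w <+: (substApply θNP)^[j] [true]) (hne : w ≠ []) : 1 - freqOne ≤ discrepancy w := by
  refine prefix_iterate_substApply_induction θNP (P := (1 - freqOne ≤ discrepancy ·))
    (by simp [discrepancy]) ?_ j hw hne
  intro w w' c r ih hr heq
  have hD := congrArg discrepancy heq
  rw [discrepancy_append, discrepancy_substApply_θNP] at hD
  have hα : 0 ≤ 2 + freqOne := by linarith [freqOne_mem_Icc.1]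
  calc 1 - freqOne
      = (2 + freqOne) * (1 - freqOne) - (2 - 3 * freqOne) := by linear_combination freqOne_sq
    _ ≤ (2 + freqOne) * discrepancy (w' ++ [c]) - discrepancy ((θNP c).drop r) := by
      gcongr
      exact (discrepancy_drop_θNP_mem_Icc c hr).2
    _ = discrepancy w := by linarith

theorem two_le_length_θNP (b : Bool) : 2 ≤ (θNP b).length := by
  cases b <;> simp [θNP]

/-- **Proposition 2 of the paper.** For `θ : 0 ↦ 00001, 1 ↦ 1110`,
there is no balanced pair of nonempty prefixes of the two fixed points
`u* = θ^∞(0)` and `v* = θ^∞(1)`: there are no nonempty prefixes `A` of `u*` and `B`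
of `v*` with `N₀(A) = N₀(B)` and `N₁(A) = N₁(B)`. -/
theorem no_balanced_prefixes
    (u v : ℕ → Bool) (hu : IsFixPt θNP false u) (hv : IsFixPt θNP true v) :
    ¬ ∃ m n : ℕ, 0 < m ∧ 0 < n ∧
        (prefixN u m).count false = (prefixN v n).count false ∧
        (prefixN u m).count true = (prefixN v n).count true := by
  rintro ⟨m, n, hm, -, h₀, h₁⟩
  have : n = m := by simpa [h₀, h₁] using List.count_false_add_count_true (prefixN u m)
  subst n
  have hne (x : ℕ → Bool) : prefixN x m ≠ [] := List.ne_nil_of_length_pos (by simpa)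
  have hDu := discrepancy_le_of_prefix_iterate_false
    (hu.prefixN_prefix_iterate θNP two_le_length_θNP m) (hne u)
  have hDv := le_discrepancy_of_prefix_iterate_true
    (hv.prefixN_prefix_iterate θNP two_le_length_θNP m) (hne v)
  have : discrepancy (prefixN u m) = discrepancy (prefixN v m) := by
    rw [discrepancy, discrepancy, h₁, length_prefixN, length_prefixN]
  linarith
end

section
/- Consider the substitution σ on the alphabet {1,2,3} defined by σ(1) = 123, σ(2) = 222, σ(3) = 333, and let x = σ^∞(1) be its fixed point starting with 1. Then the frequency of the letter 2 in x does not exist: the limit as n → ∞ of (1/n)·Card{1 ≤ k ≤ n : x_k = 2} does not exist. -/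
open Filter

/-- The substitution `σ` on the alphabet `{1,2,3}` (encoded as `Fin 3 = {0,1,2}`):
`1 ↦ 123`, `2 ↦ 222`, `3 ↦ 333`. -/
def σ₃ : Fin 3 → List (Fin 3) := fun a =>
  if a = 0 then [0, 1, 2] else [a, a, a]

/-! Since `σ^(k+1)(1) = σ^k(1) 2^(3^k) 3^(3^k)`, the number `c(n)` of letters `2` among the first
`n` letters of `x` satisfies `2 c(3^k) + 1 = 3^k` and `c(2·3^k) = c(3^k) + 3^k`. Hence the ratio
`c(n)/n` stays below `1/2` along `n = 3^k`, while its value at `2·3^k` is the mean of `1` and its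
value at `3^k`: a limit `f` would satisfy both `f ≤ 1/2` and `f = (f + 1)/2`. -/

open Topology

lemma substApply_replicate {α : Type*} {σ : α → List α} {a : α} {n : ℕ}
    (h : σ a = List.replicate n a) (m : ℕ) :
    substApply σ (List.replicate m a) = List.replicate (m * n) a := by
  simp [substApply, List.flatMap_replicate, h, List.flatten_replicate_replicate]

lemma IsFixPt.apply_length_add {α : Type*} {σ : α → List α} {a b : α} {x : ℕ → α}
    (hx : IsFixPt σ a x) {k n j : ℕ} {u v : List α}
    (h : (substApply σ)^[k] [a] = u ++ List.replicate n b ++ v) (hj : j < n) :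
    x (u.length + j) = b := by
  have hlt : u.length + j < ((substApply σ)^[k] [a]).length := by simp [h]; omega
  rw [hx k _ hlt, List.getElem_of_eq h, List.getElem_append_left (by simpa using hj),
    List.getElem_append_right (by omega)]
  simp

lemma iterate_σ₃_succ (k : ℕ) :
    (substApply σ₃)^[k + 1] [0] =
      (substApply σ₃)^[k] [0] ++ List.replicate (3 ^ k) 1 ++ List.replicate (3 ^ k) 2 := by
  induction k with
  | zero => rfl
  | succ k ih =>
    conv_lhs => rw [Function.iterate_succ_apply', ih]
    rw [substApply, List.flatMap_append, List.flatMap_append, ← substApply, ← substApply,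
      ← substApply, ← Function.iterate_succ_apply' (substApply σ₃),
      substApply_replicate (σ := σ₃) (n := 3) rfl, substApply_replicate (σ := σ₃) (n := 3) rfl,
      pow_succ]

lemma length_iterate_σ₃ (k : ℕ) : ((substApply σ₃)^[k] [0]).length = 3 ^ k := by
  induction k with
  | zero => rfl
  | succ k ih => rw [iterate_σ₃_succ]; simp [ih]; ring

lemma IsFixPt.count_σ₃_two_mul_pow {x : ℕ → Fin 3} (hx : IsFixPt σ₃ 0 x) (k : ℕ) :
    Nat.count (x · = 1) (2 * 3 ^ k) = Nat.count (x · = 1) (3 ^ k) + 3 ^ k := by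
  rw [two_mul, Nat.count_add]
  congr 1
  refine Nat.count_of_forall fun j hj => ?_
  simpa [length_iterate_σ₃] using hx.apply_length_add (iterate_σ₃_succ k) hj

lemma IsFixPt.count_σ₃_pow_succ {x : ℕ → Fin 3} (hx : IsFixPt σ₃ 0 x) (k : ℕ) :
    Nat.count (x · = 1) (3 ^ (k + 1)) = Nat.count (x · = 1) (3 ^ k) + 3 ^ k := by
  rw [show 3 ^ (k + 1) = 2 * 3 ^ k + 3 ^ k by ring, Nat.count_add, hx.count_σ₃_two_mul_pow,
    Nat.count_of_forall_not (p := fun j => x (2 * 3 ^ k + j) = 1) fun j hj => ?_, add_zero]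
  have hx_two := hx.apply_length_add (v := []) (by rw [iterate_σ₃_succ, List.append_nil]) hj
  rw [List.length_append, length_iterate_σ₃, List.length_replicate, ← two_mul] at hx_two
  simp [hx_two]

lemma IsFixPt.two_mul_count_σ₃_pow_add_one {x : ℕ → Fin 3} (hx : IsFixPt σ₃ 0 x) (k : ℕ) :
    2 * Nat.count (x · = 1) (3 ^ k) + 1 = 3 ^ k := by
  induction k with
  | zero =>
    have hx0 : x 0 = 0 := hx 0 0 (by simp)
    simp [Nat.count_one, hx0]
  | succ k ih => rw [hx.count_σ₃_pow_succ, pow_succ]; omega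

lemma not_exists_tendsto_count_div {p : ℕ → Prop} [DecidablePred p] {N : ℕ → ℕ}
    (hN : Tendsto N atTop atTop) (hN0 : ∀ k, 0 < N k)
    (hdouble : ∀ k, Nat.count p (2 * N k) = Nat.count p (N k) + N k)
    (hhalf : ∀ k, 2 * Nat.count p (N k) < N k) :
    ¬ ∃ f : ℝ, Tendsto (fun n : ℕ => (Nat.count p n : ℝ) / n) atTop (𝓝 f) := by
  rintro ⟨f, hf⟩
  set r : ℕ → ℝ := fun n => (Nat.count p n : ℝ) / n
  have hr_double : ∀ k, r (2 * N k) = (r (N k) + 1) / 2 := by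
    intro k
    have : (N k : ℝ) ≠ 0 := (Nat.cast_pos.2 (hN0 k)).ne'
    simp only [r, hdouble]
    push_cast
    field_simp
  have hr_half : ∀ k, r (N k) ≤ 1 / 2 := by
    intro k
    have : (2 * Nat.count p (N k) : ℝ) ≤ N k := by exact_mod_cast (hhalf k).le
    rw [div_le_iff₀ (Nat.cast_pos.2 (hN0 k))]
    linarith
  have hlim : Tendsto (fun k => r (N k)) atTop (𝓝 f) := hf.comp hN
  have hlim_double : Tendsto (fun k => r (2 * N k)) atTop (𝓝 ((f + 1) / 2)) := by
    simpa only [hr_double] using (hlim.add_const 1).div_const 2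
  have hf_one : f = (f + 1) / 2 :=
    tendsto_nhds_unique (hf.comp (tendsto_id.const_mul_atTop' two_pos |>.comp hN)) hlim_double
  have hf_half : f ≤ 1 / 2 := le_of_tendsto' hlim hr_half
  linarith

/-- For the substitution `1 ↦ 123, 2 ↦ 222, 3 ↦ 333` with fixed
point `x = σ^∞(1)`, the frequency of the letter `2` in `x` does not exist. -/
theorem frequency_does_not_exist
    (x : ℕ → Fin 3) (hx : IsFixPt σ₃ 0 x) :
    ¬ ∃ f : ℝ, Tendsto
        (fun n : ℕ => (((Finset.range n).filter (fun k => x k = 1)).card : ℝ) / n)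
        atTop (nhds f) := by
  simp only [← Nat.count_eq_card_filter_range]
  exact not_exists_tendsto_count_div (tendsto_pow_atTop_atTop_of_one_lt (by norm_num : 1 < 3))
    (fun k => by positivity) hx.count_σ₃_two_mul_pow
    (fun k => (hx.two_mul_count_σ₃_pow_add_one k).le)
end

section
/- Let θ be the substitution θ(0) = 011, θ(1) = 101, with fixed points u* = θ^∞(0) and v* = θ^∞(1), and let Δ* = ((u*_n, v*_n))_{n≥0} be the diagonal sequence over the alphabet {(0,0),(0,1),(1,0),(1,1)}. Then Δ* contains arbitrarily long blocks consisting only of the letters (0,0) and (1,1); consequently the letters (0,1) and (1,0) occur in Δ* but Δ* is not uniformly recurrent. -/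
/-- The word `w` occurs in the sequence `x` at position `m`. -/
def OccursAt {α : Type*} (x : ℕ → α) (w : List α) (m : ℕ) : Prop :=
  ∀ i (h : i < w.length), x (m + i) = w[i]

/-- A sequence is uniformly recurrent if every word occurring in it occurs
syndetically (with bounded gaps). -/
def UniformlyRecurrent {α : Type*} (x : ℕ → α) : Prop :=
  ∀ w : List α, (∃ m, OccursAt x w m) →
    ∃ B : ℕ, ∀ N : ℕ, ∃ m, N ≤ m ∧ m ≤ N + B ∧ OccursAt x w m

/-- The substitution `θ(0) = 011`, `θ(1) = 101`. -/
def θD : Bool → List Bool := fun b =>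
  if b then [true, false, true] else [false, true, true]

/-!
A fixed point `x` of a substitution `σ` of constant length `ℓ ≥ 2` satisfies
`x (ℓ n + j) = σ(x n)_j`, so two fixed points that agree on `[m, m + L)` agree on
`[ℓ m, ℓ m + ℓ L)`. Since `θ(0)` and `θ(1)` both end in `1`, `u*` and `v*` agree at position 2,
hence on every block `[2·3ᵏ, 3ᵏ⁺¹)`. These blocks contain no `(0,1)`, which occurs at position 0,
so its occurrences have unbounded gaps.
-/

section ConstantLength

variable {α : Type*} {σ : α → List α} {ℓ : ℕ}

lemma length_substApply (hσ : ∀ a, (σ a).length = ℓ) (w : List α) :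
    (substApply σ w).length = ℓ * w.length := by
  induction w with
  | nil => rfl
  | cons a w ih =>
    simp only [substApply, List.flatMap_cons, List.length_append, List.length_cons] at ih ⊢
    rw [ih, hσ, Nat.mul_succ, Nat.add_comm]

lemma length_iterate_substApply (hσ : ∀ a, (σ a).length = ℓ) (k : ℕ) (a : α) :
    ((substApply σ)^[k] [a]).length = ℓ ^ k := by
  induction k with
  | zero => rfl
  | succ k ih => rw [Function.iterate_succ_apply', length_substApply hσ, ih, pow_succ, mul_comm]

lemma getElem?_substApply (hσ : ∀ a, (σ a).length = ℓ) {w : List α} {i j : ℕ}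
    (hi : i < w.length) (hj : j < ℓ) :
    (substApply σ w)[ℓ * i + j]? = (σ w[i])[j]? := by
  induction w generalizing i with
  | nil => simp at hi
  | cons a w ih =>
    have hcons : substApply σ (a :: w) = σ a ++ substApply σ w := List.flatMap_cons
    rw [hcons]
    cases i with
    | zero => simpa using List.getElem?_append_left (hσ a ▸ hj)
    | succ i =>
      have hshift : ℓ * (i + 1) + j = ℓ * i + j + (σ a).length := by rw [hσ]; ring
      rw [hshift, List.getElem?_append_right (Nat.le_add_left _ _), Nat.add_sub_cancel,
        ih (Nat.lt_of_succ_lt_succ hi), List.getElem_cons_succ]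

lemma IsFixPt.apply_mul_add {a : α} {x : ℕ → α} (hx : IsFixPt σ a x)
    (hσ : ∀ a, (σ a).length = ℓ) (hℓ : 2 ≤ ℓ) (n : ℕ) {j : ℕ} (hj : j < ℓ) :
    x (ℓ * n + j) = (σ (x n))[j]'(hσ (x n) ▸ hj) := by
  have hn : n < ((substApply σ)^[n] [a]).length := by
    rw [length_iterate_substApply hσ]; exact Nat.lt_pow_self hℓ
  have hnj : ℓ * n + j < ((substApply σ)^[n + 1] [a]).length := by
    rw [length_iterate_substApply hσ, pow_succ']
    have := Nat.lt_pow_self (n := n) hℓ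
    nlinarith
  have key := getElem?_substApply hσ hn hj
  rw [← Function.iterate_succ_apply' (substApply σ), ← hx n n hn] at key
  rw [List.getElem?_eq_getElem hnj, List.getElem?_eq_getElem (hσ (x n) ▸ hj)] at key
  rw [hx (n + 1) _ hnj]
  exact Option.some_injective _ key

lemma IsFixPt.apply_zero {a : α} {x : ℕ → α} (hx : IsFixPt σ a x) : x 0 = a :=
  hx 0 0 Nat.one_pos

lemma IsFixPt.agree_mul {a b : α} {x y : ℕ → α} (hx : IsFixPt σ a x) (hy : IsFixPt σ b y)
    (hσ : ∀ a, (σ a).length = ℓ) (hℓ : 2 ≤ ℓ) {m L : ℕ}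
    (h : ∀ i < L, x (m + i) = y (m + i)) : ∀ i < ℓ * L, x (ℓ * m + i) = y (ℓ * m + i) := by
  intro i hi
  have hℓ0 : 0 < ℓ := by omega
  have hdecomp : ℓ * m + i = ℓ * (m + i / ℓ) + i % ℓ := by
    rw [Nat.mul_add, Nat.add_assoc, Nat.div_add_mod]
  have hq : i / ℓ < L := (Nat.div_lt_iff_lt_mul hℓ0).2 (by rwa [Nat.mul_comm])
  rw [hdecomp, hx.apply_mul_add hσ hℓ _ (Nat.mod_lt i hℓ0),
    hy.apply_mul_add hσ hℓ _ (Nat.mod_lt i hℓ0)]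
  simp only [h _ hq]

end ConstantLength

section Theta

variable {a b : Bool} {x y : ℕ → Bool}

lemma θD_length (b : Bool) : (θD b).length = 3 := by cases b <;> rfl

lemma IsFixPt.θD_apply_one (hx : IsFixPt θD a x) : x 1 = !a := by
  have h := hx.apply_mul_add θD_length (by norm_num) 0 (j := 1) (by norm_num)
  rw [hx.apply_zero] at h
  cases a <;> exact h

lemma IsFixPt.θD_apply_two (hx : IsFixPt θD a x) : x 2 = true := by
  have h := hx.apply_mul_add θD_length (by norm_num) 0 (j := 2) (by norm_num)
  cases hx0 : x 0 <;> simp only [hx0] at h <;> exact h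

lemma IsFixPt.θD_agree_on_block (hx : IsFixPt θD a x) (hy : IsFixPt θD b y) (k : ℕ) :
    ∀ i < 3 ^ k, x (2 * 3 ^ k + i) = y (2 * 3 ^ k + i) := by
  induction k with
  | zero =>
    intro i hi
    obtain rfl : i = 0 := by simpa using hi
    exact hx.θD_apply_two.trans hy.θD_apply_two.symm
  | succ k ih =>
    have h := hx.agree_mul hy θD_length (by norm_num) ih
    rwa [← Nat.mul_assoc, Nat.mul_comm 3 2, Nat.mul_assoc, ← pow_succ'] at h

lemma IsFixPt.θD_exists_long_agreement (hx : IsFixPt θD a x) (hy : IsFixPt θD b y) (L : ℕ) :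
    ∃ m, ∀ i < L, x (m + i) = y (m + i) :=
  ⟨2 * 3 ^ L, fun i hi => hx.θD_agree_on_block hy L i (hi.trans (Nat.lt_pow_self (by norm_num)))⟩

end Theta

lemma not_uniformlyRecurrent_of_forall_exists_gap {α : Type*} {x : ℕ → α} {c : α}
    (hc : ∃ n, x n = c) (hgap : ∀ L, ∃ m, ∀ i < L, x (m + i) ≠ c) :
    ¬ UniformlyRecurrent x := by
  intro hrec
  obtain ⟨n, hn⟩ := hc
  obtain ⟨B, hB⟩ := hrec [c] ⟨n, fun i hi => by
    obtain rfl : i = 0 := by simpa using hi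
    exact hn⟩
  obtain ⟨m, hm⟩ := hgap (B + 1)
  obtain ⟨m', hmm', hm'B, hocc⟩ := hB m
  have hm' : m + (m' - m) = m' := Nat.add_sub_cancel' hmm'
  exact hm (m' - m) (by omega) (by rw [hm']; exact hocc 0 Nat.one_pos)

/-- For `θ(0) = 011, θ(1) = 101` with fixed points `u* = θ^∞(0)`,
`v* = θ^∞(1)`, the diagonal `Δ* = ((u*_n, v*_n))ₙ` contains arbitrarily long blocks
consisting only of the letters `(0,0)` and `(1,1)` (i.e. blocks of coincidences);
the letters `(0,1)` and `(1,0)` both occur in `Δ*`; and `Δ*` is not uniformly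
recurrent. -/
theorem diagonal_not_uniformly_recurrent
    (u v : ℕ → Bool) (hu : IsFixPt θD false u) (hv : IsFixPt θD true v) :
    (∀ L : ℕ, ∃ m : ℕ, ∀ i < L, u (m + i) = v (m + i)) ∧
    (∃ n, (u n, v n) = (false, true)) ∧
    (∃ n, (u n, v n) = (true, false)) ∧
    ¬ UniformlyRecurrent (fun n => (u n, v n)) := by
  have hblocks := hu.θD_exists_long_agreement hv
  have h01 : (u 0, v 0) = (false, true) := by rw [hu.apply_zero, hv.apply_zero]
  have h10 : (u 1, v 1) = (true, false) := by rw [hu.θD_apply_one, hv.θD_apply_one]; rfl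
  refine ⟨hblocks, ⟨0, h01⟩, ⟨1, h10⟩, not_uniformlyRecurrent_of_forall_exists_gap ⟨0, h01⟩ ?_⟩
  intro L
  obtain ⟨m, hm⟩ := hblocks L
  refine ⟨m, fun i hi hdiag => ?_⟩
  simp only [Prod.mk.injEq, hm i hi] at hdiag
  exact Bool.false_ne_true (hdiag.1.symm.trans hdiag.2)
end

section
/- Let θ be a primitive substitution on {0,1} with θ(0) beginning with 0 and θ(1) beginning with 1, whose substitution matrix M_θ is primitive with Perron–Frobenius eigenvalue λ and has an eigenvector (p,q)ᵀ with p, q positive integers for λ. Define the alphabet Ȧ = {a₁,…,a_p, b₁,…,b_q}, the morphism γ: {0,1}* → Ȧ* by γ(0) = a₁⋯a_p, γ(1) = b₁⋯b_q, and the substitution θ̇ on Ȧ by θ̇(a_k) = γ(θ(0))[(k−1)λ+1, kλ] for 1 ≤ k ≤ p and θ̇(b_ℓ) = γ(θ(1))[(ℓ−1)λ+1, ℓλ] for 1 ≤ ℓ ≤ q. Then θ̇ is well defined (i.e., |γ(θ(0))| = pλ and |γ(θ(1))| = qλ), θ̇ has constant length λ, and γ ∘ θ = θ̇ ∘ γ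 on {0,1}*. -/
/-! The eigenvector equation says exactly that `γ(θ(0))` and `γ(θ(1))` have lengths `pλ` and
`qλ`, so cutting them into consecutive blocks of length `λ` gives `p` resp. `q` blocks, which
concatenate back to the whole word. Hence `θ̇(γ(c)) = γ(θ(c))` on letters, and the identity
`γ ∘ θ = θ̇ ∘ γ` extends to words since all maps involved are monoid morphisms. -/

open Matrix

/-- A morphism between free monoids, extended to words by concatenation. -/
def morphApply {α β : Type*} (σ : α → List β) (w : List α) : List β := w.flatMap σ

/-- The substitution matrix of `θ`: the `(i,j)` entry is the number of occurrences of
letter `j` in `θ(i)` (letter `0 = false`, letter `1 = true`). -/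
def substMatrix (θ : Bool → List Bool) : Matrix (Fin 2) (Fin 2) ℕ :=
  !![(θ false).count false, (θ false).count true;
     (θ true).count false, (θ true).count true]

/-- The morphism `γ : {0,1}* → Ȧ*` on the alphabet `Ȧ = {a₁,…,a_p} ⊔ {b₁,…,b_q}`,
sending `0 ↦ a₁⋯a_p` and `1 ↦ b₁⋯b_q`. -/
def gam (p q : ℕ) : Bool → List (Fin p ⊕ Fin q) := fun b =>
  if b then List.ofFn (fun l : Fin q => Sum.inr l) else List.ofFn (fun k : Fin p => Sum.inl k)

/-- The substitution `θ̇` on `Ȧ`: `θ̇(a_k)` is the `k`-th block of length `λ` of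
`γ(θ(0))` (i.e. `γ(θ(0))[(k−1)λ+1, kλ]` in `1`-based notation), and similarly
`θ̇(b_ℓ)` is the `ℓ`-th block of length `λ` of `γ(θ(1))`. -/
def thdot (θ : Bool → List Bool) (p q lam : ℕ) : (Fin p ⊕ Fin q) → List (Fin p ⊕ Fin q)
  | Sum.inl k => ((morphApply (gam p q) (θ false)).drop ((k : ℕ) * lam)).take lam
  | Sum.inr l => ((morphApply (gam p q) (θ true)).drop ((l : ℕ) * lam)).take lam

lemma length_take_drop_mul_of_length_eq {α : Type*} {L : List α} {n lam : ℕ}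
    (hL : L.length = n * lam) (k : Fin n) : ((L.drop (k * lam)).take lam).length = lam := by
  have hk : (k : ℕ) * lam + lam ≤ n * lam := by
    simpa [Nat.succ_mul] using Nat.mul_le_mul_right lam k.2
  simp only [List.length_take, List.length_drop, hL]
  omega

lemma flatten_ofFn_take_drop_mul {α : Type*} (L : List α) (lam : ℕ) :
    ∀ n : ℕ, (List.ofFn fun k : Fin n => (L.drop (k * lam)).take lam).flatten
      = L.take (n * lam)
  | 0 => by simp
  | n + 1 => by
    rw [List.ofFn_succ', List.concat_eq_append, List.flatten_append]
    simp only [Fin.val_castSucc, Fin.val_last, List.flatten_cons, List.flatten_nil,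
      List.append_nil]
    rw [flatten_ofFn_take_drop_mul L lam n, Nat.succ_mul, List.take_add]

lemma flatten_ofFn_take_drop_mul_of_length_eq {α : Type*} {L : List α} {n lam : ℕ}
    (hL : L.length = n * lam) :
    (List.ofFn fun k : Fin n => (L.drop (k * lam)).take lam).flatten = L := by
  rw [flatten_ofFn_take_drop_mul, ← hL, List.take_length]

lemma morphApply_substApply_of_forall {α β : Type*} {θ : α → List α} {τ : β → List β}
    {σ : α → List β} (h : ∀ a, morphApply σ (θ a) = substApply τ (σ a)) (w : List α) :
    morphApply σ (substApply θ w) = substApply τ (morphApply σ w) := by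
  simp only [morphApply, substApply, List.flatMap_assoc] at h ⊢
  exact congrArg (List.flatMap · w) (funext h)

lemma length_morphApply_gam (p q : ℕ) (w : List Bool) :
    (morphApply (gam p q) w).length = w.count false * p + w.count true * q := by
  induction w with
  | nil => simp [morphApply]
  | cons a w ih =>
    have h : morphApply (gam p q) (a :: w) = gam p q a ++ morphApply (gam p q) w := rfl
    rw [h, List.length_append, ih]
    cases a <;> simp [gam] <;> ring

section Blocks

variable {θ : Bool → List Bool} {p q lam : ℕ}

lemma length_morphApply_gam_of_mulVec_eq
    (heig : (substMatrix θ).mulVec ![p, q] = lam • ![p, q]) :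
    (morphApply (gam p q) (θ false)).length = p * lam ∧
    (morphApply (gam p q) (θ true)).length = q * lam := by
  have h0 := congrFun heig 0
  have h1 := congrFun heig 1
  simp only [substMatrix, mulVec, dotProduct, Fin.sum_univ_two] at h0 h1
  simp only [length_morphApply_gam]
  constructor
  · simpa [mul_comm] using h0
  · simpa [mul_comm] using h1

lemma length_thdot (h0 : (morphApply (gam p q) (θ false)).length = p * lam)
    (h1 : (morphApply (gam p q) (θ true)).length = q * lam) (c : Fin p ⊕ Fin q) :
    (thdot θ p q lam c).length = lam := by
  cases c with
  | inl k => exact length_take_drop_mul_of_length_eq h0 k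
  | inr l => exact length_take_drop_mul_of_length_eq h1 l

lemma substApply_thdot_gam (h0 : (morphApply (gam p q) (θ false)).length = p * lam)
    (h1 : (morphApply (gam p q) (θ true)).length = q * lam) (b : Bool) :
    substApply (thdot θ p q lam) (gam p q b) = morphApply (gam p q) (θ b) := by
  cases b
  · conv_rhs => rw [← flatten_ofFn_take_drop_mul_of_length_eq h0]
    simp only [substApply, gam, List.flatMap_def, Bool.false_eq_true, ↓reduceIte, List.map_ofFn]
    rfl
  · conv_rhs => rw [← flatten_ofFn_take_drop_mul_of_length_eq h1]
    simp only [substApply, gam, ↓reduceIte, List.flatMap_def, List.map_ofFn]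
    rfl

end Blocks

theorem constant_length_rewriting_general
    (θ : Bool → List Bool) (p q lam : ℕ)
    (heig : (substMatrix θ).mulVec ![p, q] = lam • ![p, q]) :
    (morphApply (gam p q) (θ false)).length = p * lam ∧
    (morphApply (gam p q) (θ true)).length = q * lam ∧
    (∀ c : Fin p ⊕ Fin q, (thdot θ p q lam c).length = lam) ∧
    (∀ w : List Bool,
      morphApply (gam p q) (substApply θ w)
        = substApply (thdot θ p q lam) (morphApply (gam p q) w)) := by
  obtain ⟨h0, h1⟩ := length_morphApply_gam_of_mulVec_eq heig
  exact ⟨h0, h1, length_thdot h0 h1,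
    morphApply_substApply_of_forall fun b => (substApply_thdot_gam h0 h1 b).symm⟩

/-- **construction in the proof of Proposition 1.** Let `θ` be a
primitive substitution on `{0,1}` with `θ(0) = 0⋯`, `θ(1) = 1⋯`, whose (primitive)
substitution matrix has an eigenvector `(p,q)ᵀ` with positive integer entries for the
Perron–Frobenius eigenvalue `λ`.  Then `θ̇` is well defined (`|γ(θ(0))| = pλ` and
`|γ(θ(1))| = qλ`), `θ̇` has constant length `λ`, and `γ ∘ θ = θ̇ ∘ γ` on `{0,1}*`. -/
theorem constant_length_rewriting
    (θ : Bool → List Bool) (p q lam : ℕ) (hp : 0 < p) (hq : 0 < q)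
    (hprim : ∃ k : ℕ, ∀ i j : Fin 2, 0 < ((substMatrix θ) ^ k) i j)
    (hs0 : (θ false).head? = some false) (hs1 : (θ true).head? = some true)
    (heig : (substMatrix θ).mulVec ![p, q] = lam • ![p, q]) :
    (morphApply (gam p q) (θ false)).length = p * lam ∧
    (morphApply (gam p q) (θ true)).length = q * lam ∧
    (∀ c : Fin p ⊕ Fin q, (thdot θ p q lam c).length = lam) ∧
    (∀ w : List Bool,
      morphApply (gam p q) (substApply θ w)
        = substApply (thdot θ p q lam) (morphApply (gam p q) w)) :=
  constant_length_rewriting_general θ p q lam heig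
end
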